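/- arXiv:2408.12995 — 4 statements merged into one kernel-verified Lean document; each statement's English description precedes it below -/
import Mathlib

section
/- Let n be a multiple of 4 and let g : {0,1}^n → {0,1} be defined by g(x) = 1 if and only if the number of ones in x is n/2 or n/2 + 1. Then the deterministic subcube partition complexity of g equals n. -/
open Classical

noncomputable section

/-- Flip the bits of `x` in the set `B`. -/
def flipOn {ι : Type*} [DecidableEq ι] (x : ι → Bool) (B : Finset ι) : ι → Bool :=
  fun i => if i ∈ B then !(x i) else x i

/-- Pointwise sensitivity of `f` at `x`. -/
def sensAt {ι : Type*} [Fintype ι] [DecidableEq ι] (f : (ι → Bool) → Bool)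
    (x : ι → Bool) : ℕ :=
  (Finset.univ.filter fun i => f (flipOn x {i}) ≠ f x).card

/-- Pointwise block sensitivity of `f` at `x`. -/
def bsAt {ι : Type*} [DecidableEq ι] (f : (ι → Bool) → Bool) (x : ι → Bool) : ℕ :=
  sSup {m | ∃ B : Fin m → Finset ι,
    (∀ j, f (flipOn x (B j)) ≠ f x) ∧ ∀ j k, j ≠ k → Disjoint (B j) (B k)}

/-- `W` is a witness set for `f` at `x`. -/
def IsWitness {ι : Type*} (f : (ι → Bool) → Bool) (x : ι → Bool) (W : Finset ι) : Prop :=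
  ∀ y, (∀ i ∈ W, y i = x i) → f y = f x

/-- Pointwise minimum witness size of `f` at `x`. -/
def witAt {ι : Type*} (f : (ι → Bool) → Bool) (x : ι → Bool) : ℕ :=
  sInf {k | ∃ W : Finset ι, W.card = k ∧ IsWitness f x W}

/-- Decision trees querying coordinates in `ι`. -/
inductive DTree (ι : Type*) where
  | leaf : DTree ι
  | node : ι → DTree ι → DTree ι → DTree ι

/-- The set of coordinates queried by the tree `T` on input `x`. -/
def DTree.path {ι : Type*} [DecidableEq ι] : DTree ι → (ι → Bool) → Finset ι
  | .leaf, _ => ∅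
  | .node i t0 t1, x => insert i (if x i then t1.path x else t0.path x)

/-- The tree `T` determines `f`: at each leaf the queried bits witness the value of `f`. -/
def DTree.Determines {ι : Type*} [DecidableEq ι] (T : DTree ι)
    (f : (ι → Bool) → Bool) : Prop :=
  ∀ x, IsWitness f x (T.path x)

/-- A partition of the hypercube into subcubes, encoded by the map sending each point to
the code (fixed coordinates) of its part. -/
structure SubcubePartition (ι : Type*) where
  code : (ι → Bool) → (ι → Option Bool)
  self_mem : ∀ x i b, code x i = some b → x i = b
  compat : ∀ x y, (∀ i b, code x i = some b → y i = b) → code y = code x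

/-- Number of coordinates fixed by the subcube containing `x`. -/
def SubcubePartition.codim {ι : Type*} [Fintype ι] (P : SubcubePartition ι)
    (x : ι → Bool) : ℕ :=
  (Finset.univ.filter fun i => (P.code x i).isSome).card

/-- The partition determines `f`, i.e. `f` is constant on each part. -/
def SubcubePartition.Determines {ι : Type*} (P : SubcubePartition ι)
    (f : (ι → Bool) → Bool) : Prop :=
  ∀ x y, (∀ i b, P.code x i = some b → y i = b) → f y = f x

/-- Deterministic sensitivity. -/
def detSens {ι : Type*} [Fintype ι] [DecidableEq ι] (f : (ι → Bool) → Bool) : ℕ :=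
  Finset.univ.sup fun x => sensAt f x

/-- Deterministic block sensitivity. -/
def detBS {ι : Type*} [Fintype ι] [DecidableEq ι] (f : (ι → Bool) → Bool) : ℕ :=
  Finset.univ.sup fun x => bsAt f x

/-- Deterministic witness complexity. -/
def detWit {ι : Type*} [Fintype ι] [DecidableEq ι] (f : (ι → Bool) → Bool) : ℕ :=
  Finset.univ.sup fun x => witAt f x

/-- Deterministic subcube partition complexity. -/
def detSC {ι : Type*} [Fintype ι] (f : (ι → Bool) → Bool) : ℕ :=
  sInf {k | ∃ P : SubcubePartition ι, P.Determines f ∧ ∀ x, P.codim x ≤ k}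

/-- Deterministic algorithmic (decision tree) complexity. -/
def detAlg {ι : Type*} [Fintype ι] [DecidableEq ι] (f : (ι → Bool) → Bool) : ℕ :=
  sInf {k | ∃ T : DTree ι, T.Determines f ∧ ∀ x, (T.path x).card ≤ k}

/-- Weight of the configuration `x` under the product Bernoulli(p) measure `π_p`. -/
def wt {ι : Type*} [Fintype ι] (p : ℝ) (x : ι → Bool) : ℝ :=
  ∏ i, (if x i then p else 1 - p)

/-- Expectation under `π_p`. -/
def expec {ι : Type*} [Fintype ι] [DecidableEq ι] (p : ℝ) (g : (ι → Bool) → ℝ) : ℝ :=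
  ∑ x, wt p x * g x

/-- Distributional sensitivity. -/
def distSens {ι : Type*} [Fintype ι] [DecidableEq ι] (f : (ι → Bool) → Bool) (p : ℝ) : ℝ :=
  expec p fun x => (sensAt f x : ℝ)

/-- Distributional block sensitivity. -/
def distBS {ι : Type*} [Fintype ι] [DecidableEq ι] (f : (ι → Bool) → Bool) (p : ℝ) : ℝ :=
  expec p fun x => (bsAt f x : ℝ)

/-- Distributional witness complexity. -/
def distWit {ι : Type*} [Fintype ι] [DecidableEq ι] (f : (ι → Bool) → Bool) (p : ℝ) : ℝ :=
  expec p fun x => (witAt f x : ℝ)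

/-- Distributional subcube partition complexity. -/
def distSC {ι : Type*} [Fintype ι] [DecidableEq ι] (f : (ι → Bool) → Bool) (p : ℝ) : ℝ :=
  sInf {c | ∃ P : SubcubePartition ι, P.Determines f ∧
    c = expec p fun x => (P.codim x : ℝ)}

/-- Distributional algorithmic complexity. -/
def distAlg {ι : Type*} [Fintype ι] [DecidableEq ι] (f : (ι → Bool) → Bool) (p : ℝ) : ℝ :=
  sInf {c | ∃ T : DTree ι, T.Determines f ∧
    c = expec p fun x => ((T.path x).card : ℝ)}

/-- `μ x J` is the joint probability that the bits equal `x` and the random set equals `J`;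
the conditions say: the marginal of the bits is `π_p`, the random set is a.s. a witness set
for `f`, and the random set is local (conditionally on `{I = J}` and the bits on `J`, the
bits outside `J` are still i.i.d. Bernoulli(p)). -/
def IsLocalWitnessSystem {ι : Type*} [Fintype ι] [DecidableEq ι]
    (f : (ι → Bool) → Bool) (p : ℝ) (μ : (ι → Bool) → Finset ι → ℝ) : Prop :=
  (∀ x J, 0 ≤ μ x J) ∧
  (∀ x, ∑ J, μ x J = wt p x) ∧
  (∀ x J, μ x J ≠ 0 → IsWitness f x J) ∧
  (∀ (J : Finset ι) x y, (∀ i ∈ J, x i = y i) → μ x J * wt p y = μ y J * wt p x)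

/-- Distributional local witness complexity. -/
def distLocal {ι : Type*} [Fintype ι] [DecidableEq ι]
    (f : (ι → Bool) → Bool) (p : ℝ) : ℝ :=
  sInf {c | ∃ μ : (ι → Bool) → Finset ι → ℝ, IsLocalWitnessSystem f p μ ∧
    c = ∑ x, ∑ J, μ x J * (J.card : ℝ)}


namespace NisanAux

variable {ι : Type*} [DecidableEq ι]

/-- Weight (number of ones). -/
def wgt [Fintype ι] (x : ι → Bool) : ℕ :=
  (Finset.univ.filter fun i => x i = true).card

theorem flip_flip (x : ι → Bool) (i : ι) : flipOn (flipOn x {i}) {i} = x := by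
  funext j; by_cases h : j = i <;> simp [flipOn, h]

theorem flip_pair (x : ι → Bool) {i j : ι} (hij : i ≠ j) :
    flipOn x {i, j} = flipOn (flipOn x {i}) {j} := by
  funext k
  by_cases hk : k = i
  · subst hk; simp [flipOn, hij]
  · by_cases hk' : k = j <;> simp [flipOn, hk, hk', Ne.symm hij]

theorem wgt_flip_false [Fintype ι] (x : ι → Bool) (i : ι) (h : x i = false) :
    wgt (flipOn x {i}) = wgt x + 1 := by
  have hset : (Finset.univ.filter fun j => flipOn x {i} j = true)
      = insert i (Finset.univ.filter fun j => x j = true) := by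
    ext j
    by_cases hj : j = i <;> simp [flipOn, hj, h]
  rw [wgt, hset, Finset.card_insert_of_notMem (by simp [h]), wgt]

theorem wgt_flip_true [Fintype ι] (x : ι → Bool) (i : ι) (h : x i = true) :
    wgt x = wgt (flipOn x {i}) + 1 := by
  have h' : flipOn x {i} i = false := by simp [flipOn, h]
  have := wgt_flip_false (flipOn x {i}) i h'
  rwa [flip_flip] at this

theorem wgt_indicator [Fintype ι] (A : Finset ι) :
    wgt (fun i => decide (i ∈ A)) = A.card := by
  rw [wgt]
  congr 1
  ext i
  simp

theorem card_level (n k : ℕ) :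
    (Finset.univ.filter fun x : Fin n → Bool => wgt x = k).card = n.choose k := by
  have : (Finset.univ.filter fun x : Fin n → Bool => wgt x = k).card
      = (Finset.powersetCard k (Finset.univ : Finset (Fin n))).card := by
    refine Finset.card_bij' (fun x _ => Finset.univ.filter fun i => x i = true)
      (fun A _ => fun i => decide (i ∈ A))
      (fun x hx => ?_) (fun A hA => ?_) (fun x hx => ?_) (fun A hA => ?_)
    · simp only [Finset.mem_filter] at hx
      exact Finset.mem_powersetCard.mpr ⟨Finset.subset_univ _, hx.2⟩
    · rw [Finset.mem_filter]
      refine ⟨Finset.mem_univ _, ?_⟩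
      rw [wgt_indicator]
      exact (Finset.mem_powersetCard.mp hA).2
    · funext i
      by_cases h : x i = true <;> simp [h]
    · ext i
      simp
  rw [this, Finset.card_powersetCard, Finset.card_univ, Fintype.card_fin]

/-- The trivial partition into points. -/
def trivP (ι : Type*) : SubcubePartition ι where
  code := fun x i => some (x i)
  self_mem := fun _ _ _ h => by injection h
  compat := fun x y h => by
    funext i
    show some (y i) = some (x i)
    rw [h i (x i) rfl]

theorem trivP_det (f : (ι → Bool) → Bool) : (trivP ι).Determines f := by
  intro x y h
  have : y = x := funext fun i => h i (x i) rfl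
  rw [this]

theorem trivP_codim [Fintype ι] (x : ι → Bool) :
    (trivP ι).codim x = Fintype.card ι := by
  simp [SubcubePartition.codim, trivP]

end NisanAux

/-- for `n` a multiple of 4 and `g(x) = 1` iff the number of ones of `x`
is `n/2` or `n/2 + 1`, the deterministic subcube partition complexity of `g` is `n`. -/
theorem nisan_function_detSC (n : ℕ) (hn : 4 ∣ n) (g : (Fin n → Bool) → Bool)
    (hg : ∀ x, g x = true ↔
      ((Finset.univ.filter fun i => x i = true).card = n / 2 ∨
        (Finset.univ.filter fun i => x i = true).card = n / 2 + 1)) :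
    detSC g = n := by
  classical
  have hg' : ∀ x, g x = true ↔ (NisanAux.wgt x = n / 2 ∨ NisanAux.wgt x = n / 2 + 1) := hg
  have hmem : n ∈ {k | ∃ P : SubcubePartition (Fin n), P.Determines g ∧ ∀ x, P.codim x ≤ k} :=
    ⟨NisanAux.trivP _, NisanAux.trivP_det g,
      fun x => by rw [NisanAux.trivP_codim, Fintype.card_fin]⟩
  apply le_antisymm (Nat.sInf_le hmem)
  apply le_csInf ⟨n, hmem⟩
  rintro k ⟨P, hdet, hcod⟩
  rcases Nat.eq_zero_or_pos n with h0 | hpos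
  · omega
  have hn4 : 4 ≤ n := Nat.le_of_dvd hpos hn
  by_contra hlt
  push_neg at hlt
  -- every part has a free coordinate
  have hfree : ∀ x : Fin n → Bool, ∃ i, P.code x i = none := by
    intro x
    by_contra hc
    push_neg at hc
    have hall : (Finset.univ.filter fun i => (P.code x i).isSome) = Finset.univ := by
      apply Finset.filter_true_of_mem
      intro i _
      exact Option.ne_none_iff_isSome.mp (hc i)
    have := hcod x
    rw [SubcubePartition.codim, hall, Finset.card_univ, Fintype.card_fin] at this
    omega
  -- flipping one free coordinate stays in the part
  have hmemflip : ∀ (x : Fin n → Bool) (i : Fin n), P.code x i = none →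
      ∀ l b, P.code x l = some b → flipOn x {i} l = b := by
    intro x i hi l b hl
    have hli : l ≠ i := by rintro rfl; rw [hi] at hl; simp at hl
    simp only [flipOn, Finset.mem_singleton, hli, if_false]
    exact P.self_mem x l b hl
  have hmemflip2 : ∀ (x : Fin n → Bool) (i j : Fin n), P.code x i = none →
      P.code x j = none → ∀ l b, P.code x l = some b → flipOn x {i, j} l = b := by
    intro x i j hi hj l b hl
    have hli : l ≠ i := by rintro rfl; rw [hi] at hl; simp at hl
    have hlj : l ≠ j := by rintro rfl; rw [hj] at hl; simp at hl
    simp only [flipOn, Finset.mem_insert, Finset.mem_singleton, hli, hlj, or_self, if_false]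
    exact P.self_mem x l b hl
  -- value at a free coordinate of a weight n/2 point
  have valS : ∀ (x : Fin n → Bool) (i : Fin n), NisanAux.wgt x = n / 2 →
      P.code x i = none → x i = false := by
    intro x i hx hi
    cases hxi : x i
    · rfl
    · have hgy : g (flipOn x {i}) = true := by
        rw [hdet x _ (hmemflip x i hi)]
        exact (hg' x).mpr (Or.inl hx)
      have hw := NisanAux.wgt_flip_true x i hxi
      have := (hg' _).mp hgy
      omega
  have valT : ∀ (x : Fin n → Bool) (i : Fin n), NisanAux.wgt x = n / 2 + 1 →
      P.code x i = none → x i = true := by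
    intro x i hx hi
    cases hxi : x i
    · have hgy : g (flipOn x {i}) = true := by
        rw [hdet x _ (hmemflip x i hi)]
        exact (hg' x).mpr (Or.inr hx)
      have hw := NisanAux.wgt_flip_false x i hxi
      have := (hg' _).mp hgy
      omega
    · rfl
  -- uniqueness of the free coordinate
  have uniq : ∀ x : Fin n → Bool, (NisanAux.wgt x = n / 2 ∨ NisanAux.wgt x = n / 2 + 1) →
      ∀ i j, P.code x i = none → P.code x j = none → i = j := by
    intro x hx i j hi hj
    by_contra hij
    have hgy : g (flipOn x {i, j}) = true := by
      rw [hdet x _ (hmemflip2 x i j hi hj)]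
      exact (hg' x).mpr hx
    have hmem' := (hg' _).mp hgy
    rcases hx with hx | hx
    · have hxi := valS x i hx hi
      have hxj := valS x j hx hj
      have h1 := NisanAux.wgt_flip_false x i hxi
      have hxj' : flipOn x {i} j = false := by
        simp [flipOn, (Ne.symm hij : j ≠ i), hxj]
      have h2 := NisanAux.wgt_flip_false (flipOn x {i}) j hxj'
      rw [NisanAux.flip_pair x hij] at hmem'
      omega
    · have hxi := valT x i hx hi
      have hxj := valT x j hx hj
      have h1 := NisanAux.wgt_flip_true x i hxi
      have hxj' : flipOn x {i} j = true := by
        simp [flipOn, (Ne.symm hij : j ≠ i), hxj]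
      have h2 := NisanAux.wgt_flip_true (flipOn x {i}) j hxj'
      rw [NisanAux.flip_pair x hij] at hmem'
      omega
  -- the flip map
  set F : (Fin n → Bool) → (Fin n → Bool) := fun x => flipOn x {(hfree x).choose} with hF
  have hcode : ∀ x, P.code (F x) = P.code x := fun x =>
    P.compat x (F x) (hmemflip x _ (hfree x).choose_spec)
  have hFS : ∀ x : Fin n → Bool, NisanAux.wgt x = n / 2 → NisanAux.wgt (F x) = n / 2 + 1 := by
    intro x hx
    have hv := valS x _ hx (hfree x).choose_spec
    show NisanAux.wgt (flipOn x {(hfree x).choose}) = n / 2 + 1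
    rw [NisanAux.wgt_flip_false x _ hv, hx]
  have hFT : ∀ x : Fin n → Bool, NisanAux.wgt x = n / 2 + 1 → NisanAux.wgt (F x) = n / 2 := by
    intro x hx
    have hv := valT x _ hx (hfree x).choose_spec
    have := NisanAux.wgt_flip_true x _ hv
    show NisanAux.wgt (flipOn x {(hfree x).choose}) = n / 2
    omega
  have hFF : ∀ x : Fin n → Bool, (NisanAux.wgt x = n / 2 ∨ NisanAux.wgt x = n / 2 + 1) →
      F (F x) = x := by
    intro x hx
    have h1 : P.code x (hfree (F x)).choose = none := by
      rw [← hcode x]; exact (hfree (F x)).choose_spec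
    have h2 : (hfree (F x)).choose = (hfree x).choose :=
      uniq x hx _ _ h1 (hfree x).choose_spec
    show flipOn (F x) {(hfree (F x)).choose} = x
    rw [h2]
    exact NisanAux.flip_flip x _
  -- bijection and counting
  have hcard : (Finset.univ.filter fun x : Fin n → Bool => NisanAux.wgt x = n / 2).card
      = (Finset.univ.filter fun x : Fin n → Bool => NisanAux.wgt x = n / 2 + 1).card := by
    refine Finset.card_bij' (fun x _ => F x) (fun y _ => F y)
      (fun x hx => ?_) (fun y hy => ?_) (fun x hx => ?_) (fun y hy => ?_)
    · simp only [Finset.mem_filter, Finset.mem_univ, true_and] at hx ⊢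
      exact hFS x hx
    · simp only [Finset.mem_filter, Finset.mem_univ, true_and] at hy ⊢
      exact hFT y hy
    · simp only [Finset.mem_filter, Finset.mem_univ, true_and] at hx
      exact hFF x (Or.inl hx)
    · simp only [Finset.mem_filter, Finset.mem_univ, true_and] at hy
      exact hFF y (Or.inr hy)
  rw [NisanAux.card_level, NisanAux.card_level] at hcard
  have hid := Nat.choose_succ_right_eq n (n / 2)
  rw [← hcard] at hid
  have hpos' : 0 < n.choose (n / 2) := Nat.choose_pos (by omega)
  have heq : n / 2 + 1 = n - n / 2 := Nat.eq_of_mul_eq_mul_left hpos' hid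
  omega
end
end

section
/- For every Boolean function f : {0,1}^n → {0,1} and every p ∈ [0,1], the distributional complexity measures satisfy a(f,π_p) ≥ sc(f,π_p) ≥ ℓ(f,π_p) ≥ w(f,π_p) ≥ b(f,π_p) ≥ s(f,π_p). -/
open Classical

noncomputable section

set_option linter.unusedSectionVars false

section Aux

variable {ι : Type*} [Fintype ι] [DecidableEq ι]

lemma wt_nonneg {p : ℝ} (hp0 : 0 ≤ p) (hp1 : p ≤ 1) (x : ι → Bool) : 0 ≤ wt p x := by
  refine Finset.prod_nonneg fun i _ => ?_
  split <;> linarith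

lemma expec_mono {p : ℝ} (hp0 : 0 ≤ p) (hp1 : p ≤ 1) {g1 g2 : (ι → Bool) → ℝ}
    (h : ∀ x, g1 x ≤ g2 x) : expec p g1 ≤ expec p g2 := by
  refine Finset.sum_le_sum fun x _ => ?_
  exact mul_le_mul_of_nonneg_left (h x) (wt_nonneg hp0 hp1 x)

lemma expec_nonneg {p : ℝ} (hp0 : 0 ≤ p) (hp1 : p ≤ 1) {g : (ι → Bool) → ℝ}
    (h : ∀ x, 0 ≤ g x) : 0 ≤ expec p g := by
  refine Finset.sum_nonneg fun x _ => mul_nonneg (wt_nonneg hp0 hp1 x) (h x)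

lemma witness_univ (f : (ι → Bool) → Bool) (x : ι → Bool) :
    IsWitness f x Finset.univ := by
  intro y hy
  have : y = x := funext fun i => hy i (Finset.mem_univ i)
  rw [this]

lemma exists_min_witness (f : (ι → Bool) → Bool) (x : ι → Bool) :
    ∃ W : Finset ι, W.card = witAt f x ∧ IsWitness f x W := by
  have hne : {k | ∃ W : Finset ι, W.card = k ∧ IsWitness f x W}.Nonempty :=
    ⟨Finset.univ.card, Finset.univ, rfl, witness_univ f x⟩
  exact Nat.sInf_mem hne

lemma flipOn_empty (x : ι → Bool) : flipOn x (∅ : Finset ι) = x := by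
  funext i; simp [flipOn]

lemma blocks_nonempty {f : (ι → Bool) → Bool} {x : ι → Bool} {B : Finset ι}
    (h : f (flipOn x B) ≠ f x) : B.Nonempty := by
  rcases B.eq_empty_or_nonempty with rfl | hB
  · rw [flipOn_empty] at h; exact absurd rfl h
  · exact hB

lemma bs_mem_le_card {f : (ι → Bool) → Bool} {x : ι → Bool} {m : ℕ}
    (hm : m ∈ {m | ∃ B : Fin m → Finset ι,
      (∀ j, f (flipOn x (B j)) ≠ f x) ∧ ∀ j k, j ≠ k → Disjoint (B j) (B k)}) :
    m ≤ Fintype.card ι := by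
  obtain ⟨B, hB, hdisj⟩ := hm
  have hne : ∀ j, (B j).Nonempty := fun j => blocks_nonempty (hB j)
  choose c hc using hne
  have hinj : Function.Injective c := by
    intro j k hjk
    by_contra hne'
    exact Finset.disjoint_left.1 (hdisj j k hne') (hc j) (hjk ▸ hc k)
  simpa using Fintype.card_le_of_injective c hinj

lemma bs_bddAbove (f : (ι → Bool) → Bool) (x : ι → Bool) :
    BddAbove {m | ∃ B : Fin m → Finset ι,
      (∀ j, f (flipOn x (B j)) ≠ f x) ∧ ∀ j k, j ≠ k → Disjoint (B j) (B k)} :=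
  ⟨Fintype.card ι, fun _ hm => bs_mem_le_card hm⟩

lemma sens_le_bs (f : (ι → Bool) → Bool) (x : ι → Bool) : sensAt f x ≤ bsAt f x := by
  set S := Finset.univ.filter fun i => f (flipOn x {i}) ≠ f x with hS
  have e := S.equivFin
  refine le_csSup (bs_bddAbove f x) ?_
  refine ⟨fun j => {(e.symm j : ι)}, fun j => ?_, fun j k hjk => ?_⟩
  · have := (e.symm j).2
    exact (Finset.mem_filter.mp this).2
  · simp only [Finset.disjoint_singleton]
    intro h
    exact hjk (e.symm.injective (Subtype.ext h))

lemma bs_le_wit (f : (ι → Bool) → Bool) (x : ι → Bool) : bsAt f x ≤ witAt f x := by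
  obtain ⟨W, hWcard, hW⟩ := exists_min_witness f x
  have hnonempty : {m | ∃ B : Fin m → Finset ι,
      (∀ j, f (flipOn x (B j)) ≠ f x) ∧ ∀ j k, j ≠ k → Disjoint (B j) (B k)}.Nonempty :=
    ⟨0, fun j => j.elim0, fun j => j.elim0, fun j => j.elim0⟩
  refine csSup_le hnonempty fun m hm => ?_
  obtain ⟨B, hB, hdisj⟩ := hm
  have hinter : ∀ j, ((B j) ∩ W).Nonempty := by
    intro j
    by_contra hempty
    rw [Finset.not_nonempty_iff_eq_empty, ← Finset.disjoint_iff_inter_eq_empty] at hempty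
    refine hB j (hW _ fun i hi => ?_)
    have : i ∉ B j := fun h => Finset.disjoint_left.1 hempty h hi
    simp [flipOn, this]
  choose c hc using hinter
  have hcmem : ∀ j, c j ∈ W := fun j => (Finset.mem_inter.1 (hc j)).2
  have hinj : Function.Injective fun j => (⟨c j, hcmem j⟩ : W) := by
    intro j k hjk
    by_contra hne'
    have h1 : c j ∈ B j := (Finset.mem_inter.1 (hc j)).1
    have h2 : c k ∈ B k := (Finset.mem_inter.1 (hc k)).1
    have heq : c j = c k := congrArg Subtype.val hjk
    exact Finset.disjoint_left.1 (hdisj j k hne') h1 (heq ▸ h2)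
  calc m = Fintype.card (Fin m) := (Fintype.card_fin m).symm
    _ ≤ Fintype.card W := Fintype.card_le_of_injective _ hinj
    _ = W.card := Fintype.card_coe W
    _ = witAt f x := hWcard

lemma path_eq_of_agree (T : DTree ι) (x y : ι → Bool)
    (h : ∀ i ∈ T.path x, y i = x i) : T.path y = T.path x := by
  induction T with
  | leaf => rfl
  | node i t0 t1 ih0 ih1 =>
    have hi : y i = x i := h i (by simp [DTree.path])
    by_cases hx : x i
    · have hy : y i = true := by rw [hi, hx]
      have hsub : ∀ j ∈ t1.path x, y j = x j := fun j hj =>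
        h j (by simp [DTree.path, hx, hj])
      simp [DTree.path, hx, hy, ih1 hsub]
    · have hy : y i = false := by rw [hi]; simpa using hx
      have hsub : ∀ j ∈ t0.path x, y j = x j := fun j hj =>
        h j (by simp [DTree.path, hx, hj])
      simp [DTree.path, hx, hy, ih0 hsub]

def fullTree : List ι → DTree ι
  | [] => .leaf
  | i :: l => .node i (fullTree l) (fullTree l)

lemma fullTree_path (l : List ι) (x : ι → Bool) : (fullTree l).path x = l.toFinset := by
  induction l with
  | nil => rfl
  | cons i l ih => by_cases hx : x i <;> simp [fullTree, DTree.path, hx, ih]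

end Aux

section Aux2

variable {ι : Type*} [Fintype ι] [DecidableEq ι]

/-- The trivial partition into points. -/
def fullPartition (ι : Type*) : SubcubePartition ι where
  code := fun x i => some (x i)
  self_mem := fun x i b h => Option.some_injective _ h
  compat := by
    intro x y h
    have : y = x := funext fun i => h i (x i) rfl
    rw [this]

lemma fullPartition_determines (f : (ι → Bool) → Bool) :
    (fullPartition ι).Determines f := by
  intro x y h
  have : y = x := funext fun i => h i (x i) rfl
  rw [this]

/-- The partition induced by a decision tree. -/
def treePartition (T : DTree ι) : SubcubePartition ι where
  code := fun x i => if i ∈ T.path x then some (x i) else none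
  self_mem := by
    intro x i b h
    by_cases hi : i ∈ T.path x <;> simp [hi] at h
    exact h
  compat := by
    intro x y h
    have hagree : ∀ i ∈ T.path x, y i = x i := by
      intro i hi
      exact h i (x i) (by simp [hi])
    have hpath : T.path y = T.path x := path_eq_of_agree T x y hagree
    funext i
    by_cases hi : i ∈ T.path x
    · simp [hpath, hi, hagree i hi]
    · simp [hpath, hi]

lemma treePartition_determines {f : (ι → Bool) → Bool} {T : DTree ι}
    (hT : T.Determines f) : (treePartition T).Determines f := by
  intro x y h
  refine hT x y fun i hi => ?_
  exact h i (x i) (by simp [treePartition, hi])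

lemma treePartition_codim (T : DTree ι) (x : ι → Bool) :
    (treePartition T).codim x = (T.path x).card := by
  unfold SubcubePartition.codim
  congr 1
  ext i
  by_cases hi : i ∈ T.path x <;> simp [treePartition, hi]

/-- Support of the code of a partition at `x`. -/
def codeSupp (P : SubcubePartition ι) (x : ι → Bool) : Finset ι :=
  Finset.univ.filter fun i => (P.code x i).isSome

lemma codeSupp_card (P : SubcubePartition ι) (x : ι → Bool) :
    (codeSupp P x).card = P.codim x := rfl

lemma code_eq_of_agree (P : SubcubePartition ι) (x y : ι → Bool)
    (h : ∀ i ∈ codeSupp P x, y i = x i) : P.code y = P.code x := by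
  refine P.compat x y fun i b hib => ?_
  have hi : i ∈ codeSupp P x := by
    simp [codeSupp, hib]
  rw [h i hi]
  exact P.self_mem x i b hib

/-- The local witness system induced by a partition. -/
def partitionSystem (P : SubcubePartition ι) (p : ℝ) : (ι → Bool) → Finset ι → ℝ :=
  fun x J => if J = codeSupp P x then wt p x else 0

lemma partitionSystem_isLocal {f : (ι → Bool) → Bool} {p : ℝ}
    (hp0 : 0 ≤ p) (hp1 : p ≤ 1) {P : SubcubePartition ι} (hP : P.Determines f) :
    IsLocalWitnessSystem f p (partitionSystem P p) := by
  have hwit : ∀ x, IsWitness f x (codeSupp P x) := by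
    intro x y hy
    refine hP x y fun i b hib => ?_
    have hi : i ∈ codeSupp P x := by simp [codeSupp, hib]
    rw [hy i hi]
    exact P.self_mem x i b hib
  refine ⟨fun x J => ?_, fun x => ?_, fun x J hμ => ?_, fun J x y h => ?_⟩
  · unfold partitionSystem; split
    · exact wt_nonneg hp0 hp1 x
    · exact le_refl 0
  · simp [partitionSystem, Finset.sum_ite_eq']
  · have hJ : J = codeSupp P x := by
      by_contra hne
      exact hμ (by simp [partitionSystem, hne])
    rw [hJ]; exact hwit x
  · by_cases hx : J = codeSupp P x
    · subst hx
      have hcode : P.code y = P.code x :=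
        code_eq_of_agree P x y fun i hi => (h i hi).symm
      have hsupp : codeSupp P y = codeSupp P x := by
        unfold codeSupp; rw [hcode]
      simp [partitionSystem, hsupp, mul_comm]
    · by_cases hy : J = codeSupp P y
      · subst hy
        have hcode : P.code x = P.code y :=
          code_eq_of_agree P y x fun i hi => h i hi
        have hsupp : codeSupp P x = codeSupp P y := by
          unfold codeSupp; rw [hcode]
        exact absurd hsupp.symm hx
      · simp [partitionSystem, hx, hy]

lemma partitionSystem_value (P : SubcubePartition ι) (p : ℝ) :
    ∑ x, ∑ J, partitionSystem P p x J * (J.card : ℝ)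
      = expec p fun x => (P.codim x : ℝ) := by
  unfold expec
  refine Finset.sum_congr rfl fun x _ => ?_
  rw [Finset.sum_eq_single (codeSupp P x)]
  · simp [partitionSystem, codeSupp_card]
  · intro J _ hJ
    simp [partitionSystem, hJ]
  · intro h
    exact absurd (Finset.mem_univ _) h

end Aux2

/-- the distributional hierarchy
`a(f,π_p) ≥ sc(f,π_p) ≥ ℓ(f,π_p) ≥ w(f,π_p) ≥ b(f,π_p) ≥ s(f,π_p)`. -/
theorem dist_hierarchy (n : ℕ) (f : (Fin n → Bool) → Bool) (p : ℝ)
    (hp0 : 0 ≤ p) (hp1 : p ≤ 1) :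
    distSC f p ≤ distAlg f p ∧ distLocal f p ≤ distSC f p ∧
      distWit f p ≤ distLocal f p ∧ distBS f p ≤ distWit f p ∧
      distSens f p ≤ distBS f p := by
  have hAlgNe : {c | ∃ T : DTree (Fin n), T.Determines f ∧
      c = expec p fun x => ((T.path x).card : ℝ)}.Nonempty := by
    refine ⟨_, fullTree Finset.univ.toList, fun x => ?_, rfl⟩
    have hpath : (fullTree Finset.univ.toList).path x = Finset.univ := by
      rw [fullTree_path]; simp
    rw [hpath]; exact witness_univ f x
  have hSCNe : {c | ∃ P : SubcubePartition (Fin n), P.Determines f ∧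
      c = expec p fun x => (P.codim x : ℝ)}.Nonempty :=
    ⟨_, fullPartition _, fullPartition_determines f, rfl⟩
  have hSCbdd : BddBelow {c | ∃ P : SubcubePartition (Fin n), P.Determines f ∧
      c = expec p fun x => (P.codim x : ℝ)} := by
    refine ⟨0, fun c hc => ?_⟩
    obtain ⟨P, _, rfl⟩ := hc
    exact expec_nonneg hp0 hp1 fun x => by positivity
  have hLocNe : {c | ∃ μ : (Fin n → Bool) → Finset (Fin n) → ℝ,
      IsLocalWitnessSystem f p μ ∧ c = ∑ x, ∑ J, μ x J * (J.card : ℝ)}.Nonempty :=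
    ⟨_, partitionSystem (fullPartition _) p,
      partitionSystem_isLocal hp0 hp1 (fullPartition_determines f), rfl⟩
  have hLocbdd : BddBelow {c | ∃ μ : (Fin n → Bool) → Finset (Fin n) → ℝ,
      IsLocalWitnessSystem f p μ ∧ c = ∑ x, ∑ J, μ x J * (J.card : ℝ)} := by
    refine ⟨0, fun c hc => ?_⟩
    obtain ⟨μ, hμ, rfl⟩ := hc
    refine Finset.sum_nonneg fun x _ => Finset.sum_nonneg fun J _ => ?_
    exact mul_nonneg (hμ.1 x J) (by positivity)
  refine ⟨?_, ?_, ?_, ?_, ?_⟩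
  · -- distSC ≤ distAlg
    refine le_csInf hAlgNe ?_
    rintro c ⟨T, hT, rfl⟩
    refine csInf_le hSCbdd ⟨treePartition T, treePartition_determines hT, ?_⟩
    simp only [treePartition_codim]
  · -- distLocal ≤ distSC
    refine le_csInf hSCNe ?_
    rintro c ⟨P, hP, rfl⟩
    exact csInf_le hLocbdd ⟨partitionSystem P p,
      partitionSystem_isLocal hp0 hp1 hP, (partitionSystem_value P p).symm⟩
  · -- distWit ≤ distLocal
    refine le_csInf hLocNe ?_
    rintro c ⟨μ, ⟨hpos, hsum, hwit, _⟩, rfl⟩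
    calc distWit f p = ∑ x, (∑ J, μ x J) * (witAt f x : ℝ) := by
          exact Finset.sum_congr rfl fun x _ => by rw [hsum]
      _ = ∑ x, ∑ J, μ x J * (witAt f x : ℝ) :=
          Finset.sum_congr rfl fun x _ => Finset.sum_mul _ _ _
      _ ≤ ∑ x, ∑ J, μ x J * (J.card : ℝ) := by
          refine Finset.sum_le_sum fun x _ => Finset.sum_le_sum fun J _ => ?_
          by_cases h : μ x J = 0
          · simp [h]
          · refine mul_le_mul_of_nonneg_left ?_ (hpos x J)
            have hle : witAt f x ≤ J.card := Nat.sInf_le ⟨J, rfl, hwit x J h⟩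
            exact_mod_cast hle
  · -- distBS ≤ distWit
    exact expec_mono hp0 hp1 fun x => by exact_mod_cast bs_le_wit f x
  · -- distSens ≤ distBS
    exact expec_mono hp0 hp1 fun x => by exact_mod_cast sens_le_bs f x
end
end

section
/- Let f be a Boolean function on n bits, p ∈ (0,1), and suppose b(f,π_p) = s(f,π_p) where f depends on every bit. Then for every x ∈ {0,1}^n, the connected component of x in the graph on {0,1}^n (with edges between Hamming neighbors) restricted to the level set {y : f(y) = f(x)} equals the subcube {y : y_i = x_i for all i in the pivotal set S_f(x)}. -/
open Classical

noncomputable section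

namespace ComponentAux

variable {n : ℕ}

lemma flipOn_empty (x : Fin n → Bool) : flipOn x (∅ : Finset (Fin n)) = x := by
  funext j; simp [flipOn]

lemma flipOn_single_self (x : Fin n → Bool) (i : Fin n) :
    flipOn x {i} i = !(x i) := by simp [flipOn]

lemma flipOn_single_ne (x : Fin n → Bool) {i j : Fin n} (h : j ≠ i) :
    flipOn x {i} j = x j := by simp [flipOn, h]

lemma flipOn_flipOn_single (x : Fin n → Bool) (i : Fin n) :
    flipOn (flipOn x {i}) {i} = x := by
  funext j; by_cases h : j = i <;> simp [flipOn, h]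

lemma flipOn_pair (x : Fin n → Bool) {i j : Fin n} (h : i ≠ j) :
    flipOn x {i, j} = flipOn (flipOn x {i}) {j} := by
  funext k
  by_cases hk : k = j
  · subst hk; simp [flipOn, h.symm]
  · by_cases hk' : k = i
    · subst hk'; simp [flipOn, h]
    · simp [flipOn, hk, hk']

/-- The sensitive set of `f` at `x`. -/
def S (f : (Fin n → Bool) → Bool) (x : Fin n → Bool) : Finset (Fin n) :=
  Finset.univ.filter fun i => f (flipOn x {i}) ≠ f x

lemma sensAt_eq (f : (Fin n → Bool) → Bool) (x : Fin n → Bool) :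
    sensAt f x = (S f x).card := rfl

lemma mem_S {f : (Fin n → Bool) → Bool} {x : Fin n → Bool} {i : Fin n} :
    i ∈ S f x ↔ f (flipOn x {i}) ≠ f x := by simp [S]

lemma block_bound (f : (Fin n → Bool) → Bool) (x : Fin n → Bool) {m : ℕ}
    (h : ∃ B : Fin m → Finset (Fin n),
      (∀ j, f (flipOn x (B j)) ≠ f x) ∧ ∀ j k, j ≠ k → Disjoint (B j) (B k)) :
    m ≤ n := by
  obtain ⟨B, hB, hdis⟩ := h
  have hne : ∀ j, (B j).Nonempty := by
    intro j
    rcases (B j).eq_empty_or_nonempty with h | h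
    · exact absurd (by rw [h, flipOn_empty]) (hB j)
    · exact h
  choose g hg using hne
  have hinj : Function.Injective g := by
    intro a b hab
    by_contra hne'
    exact (Finset.disjoint_left.mp (hdis a b hne') (hg a)) (hab ▸ hg b)
  simpa using Fintype.card_le_of_injective g hinj

lemma le_bsAt (f : (Fin n → Bool) → Bool) (x : Fin n → Bool) {m : ℕ}
    (h : ∃ B : Fin m → Finset (Fin n),
      (∀ j, f (flipOn x (B j)) ≠ f x) ∧ ∀ j k, j ≠ k → Disjoint (B j) (B k)) :
    m ≤ bsAt f x :=
  le_csSup ⟨n, fun _ hk => block_bound f x hk⟩ h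

lemma sensAt_le_bsAt (f : (Fin n → Bool) → Bool) (x : Fin n → Bool) :
    sensAt f x ≤ bsAt f x := by
  rw [sensAt_eq]
  refine le_bsAt f x ?_
  set s := S f x with hs
  refine ⟨fun j => {(s.orderIsoOfFin rfl j : Fin n)}, ?_, ?_⟩
  · intro j
    have := (s.orderIsoOfFin rfl j).2
    exact mem_S.mp this
  · intro j k hjk
    have : ((s.orderIsoOfFin rfl j : Fin n)) ≠ ((s.orderIsoOfFin rfl k : Fin n)) := by
      intro hEq
      exact hjk ((s.orderIsoOfFin rfl).injective (Subtype.ext hEq))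
    exact Finset.disjoint_singleton.mpr this

lemma wt_pos {p : ℝ} (hp0 : 0 < p) (hp1 : p < 1) (x : Fin n → Bool) :
    0 < wt p x := by
  refine Finset.prod_pos fun i _ => ?_
  by_cases h : x i <;> simp [h, hp0, sub_pos.mpr hp1]

lemma pointwise_eq {f : (Fin n → Bool) → Bool} {p : ℝ} (hp0 : 0 < p) (hp1 : p < 1)
    (heq : distBS f p = distSens f p) (x : Fin n → Bool) :
    bsAt f x = sensAt f x := by
  have hsum : ∑ y : Fin n → Bool, wt p y * ((bsAt f y : ℝ) - (sensAt f y : ℝ)) = 0 := by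
    have : ∑ y : Fin n → Bool, wt p y * ((bsAt f y : ℝ) - (sensAt f y : ℝ))
        = distBS f p - distSens f p := by
      rw [distBS, distSens, expec, expec, ← Finset.sum_sub_distrib]
      exact Finset.sum_congr rfl fun y _ => by ring
    rw [this, heq, sub_self]
  have hnonneg : ∀ y ∈ (Finset.univ : Finset (Fin n → Bool)),
      0 ≤ wt p y * ((bsAt f y : ℝ) - (sensAt f y : ℝ)) := by
    intro y _
    have h1 : (0 : ℝ) ≤ (bsAt f y : ℝ) - (sensAt f y : ℝ) := by
      have := sensAt_le_bsAt f y
      have : (sensAt f y : ℝ) ≤ (bsAt f y : ℝ) := by exact_mod_cast this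
      linarith
    exact mul_nonneg (wt_pos hp0 hp1 y).le h1
  have hx := (Finset.sum_eq_zero_iff_of_nonneg hnonneg).mp hsum x (Finset.mem_univ x)
  have hwt := (wt_pos hp0 hp1 x).ne'
  have : (bsAt f x : ℝ) - (sensAt f x : ℝ) = 0 := by
    rcases mul_eq_zero.mp hx with h | h
    · exact absurd h hwt
    · exact h
  have : (bsAt f x : ℝ) = (sensAt f x : ℝ) := by linarith
  exact_mod_cast this

lemma no_extra_block {f : (Fin n → Bool) → Bool} (x : Fin n → Bool)
    (hbs : bsAt f x = sensAt f x) {i j : Fin n} (hi : i ∉ S f x) (hj : j ∉ S f x)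
    (hij : i ≠ j) (hblock : f (flipOn x {i, j}) ≠ f x) : False := by
  set s := S f x with hs
  set m := s.card with hm
  have hle : m + 1 ≤ bsAt f x := by
    refine le_bsAt f x ?_
    refine ⟨Fin.snoc (fun k : Fin m => {(s.orderIsoOfFin rfl k : Fin n)}) {i, j}, ?_, ?_⟩
    · intro k
      refine Fin.lastCases ?_ ?_ k
      · rw [Fin.snoc_last]; exact hblock
      · intro a
        rw [Fin.snoc_castSucc]
        exact mem_S.mp (s.orderIsoOfFin rfl a).2
    · have hne : ∀ a : Fin m, ((s.orderIsoOfFin rfl a : Fin n)) ∉ ({i, j} : Finset (Fin n)) := by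
        intro a ha
        have hmem := (s.orderIsoOfFin rfl a).2
        rcases Finset.mem_insert.mp ha with h | h
        · exact hi (h ▸ hmem)
        · exact hj ((Finset.mem_singleton.mp h) ▸ hmem)
      intro k l hkl
      rcases Fin.eq_castSucc_or_eq_last k with ⟨a, rfl⟩ | rfl <;>
        rcases Fin.eq_castSucc_or_eq_last l with ⟨b, rfl⟩ | rfl
      · rw [Fin.snoc_castSucc, Fin.snoc_castSucc]
        have : ((s.orderIsoOfFin rfl a : Fin n)) ≠ ((s.orderIsoOfFin rfl b : Fin n)) := by
          intro hEq
          exact hkl (congrArg Fin.castSucc ((s.orderIsoOfFin rfl).injective (Subtype.ext hEq)))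
        exact Finset.disjoint_singleton.mpr this
      · rw [Fin.snoc_castSucc, Fin.snoc_last]
        exact Finset.disjoint_singleton_left.mpr (hne a)
      · rw [Fin.snoc_last, Fin.snoc_castSucc]
        exact Finset.disjoint_singleton_right.mpr (hne b)
      · exact absurd rfl hkl
  rw [hbs, sensAt_eq, ← hs, ← hm] at hle
  omega

lemma S_flip_subset {f : (Fin n → Bool) → Bool}
    (hbs : ∀ x, bsAt f x = sensAt f x) (x : Fin n → Bool) (i : Fin n)
    (hfx : f (flipOn x {i}) = f x) :
    S f (flipOn x {i}) ⊆ S f x := by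
  intro j hj
  rw [mem_S] at hj
  have hi : i ∉ S f x := by rw [mem_S]; exact fun h => h hfx
  have hji : j ≠ i := by
    intro h
    subst h
    rw [flipOn_flipOn_single] at hj
    exact hj hfx.symm
  by_contra hjx
  rw [mem_S, not_not] at hjx
  refine no_extra_block x (hbs x) hi (by rw [mem_S, not_not]; exact hjx) (Ne.symm hji) ?_
  rw [flipOn_pair x (Ne.symm hji)]
  exact fun hc => hj (hc.trans hfx.symm)

lemma S_flip_eq {f : (Fin n → Bool) → Bool}
    (hbs : ∀ x, bsAt f x = sensAt f x) (x : Fin n → Bool) (i : Fin n)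
    (hfx : f (flipOn x {i}) = f x) :
    S f (flipOn x {i}) = S f x := by
  refine Finset.Subset.antisymm (S_flip_subset hbs x i hfx) ?_
  have h2 := S_flip_subset hbs (flipOn x {i}) i
    (by rw [flipOn_flipOn_single]; exact hfx.symm)
  rwa [flipOn_flipOn_single] at h2

lemma reach_invariant {f : (Fin n → Bool) → Bool}
    (hbs : ∀ x, bsAt f x = sensAt f x) (x y : Fin n → Bool)
    (h : Relation.ReflTransGen
      (fun a b => f b = f a ∧ ∃ i : Fin n, b = flipOn a {i}) x y) :
    S f y = S f x ∧ ∀ i ∈ S f x, y i = x i := by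
  induction h with
  | refl => exact ⟨rfl, fun _ _ => rfl⟩
  | tail _ step ih =>
    obtain ⟨hS, hagree⟩ := ih
    obtain ⟨hfc, i, rfl⟩ := step
    have hSc : S f (flipOn _ {i}) = S f _ := S_flip_eq hbs _ i hfc
    refine ⟨hSc.trans hS, fun j hj => ?_⟩
    have hiS : i ∉ S f x := by
      rw [← hS, mem_S, not_not]; exact hfc
    have hji : j ≠ i := fun h => hiS (h ▸ hj)
    rw [flipOn_single_ne _ hji]
    exact hagree j hj

lemma reach_of_agree {f : (Fin n → Bool) → Bool}
    (hbs : ∀ x, bsAt f x = sensAt f x) :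
    ∀ (k : ℕ) (x y : Fin n → Bool),
      (Finset.univ.filter fun i => y i ≠ x i).card ≤ k →
      (∀ i ∈ S f x, y i = x i) →
      Relation.ReflTransGen
        (fun a b => f b = f a ∧ ∃ i : Fin n, b = flipOn a {i}) x y := by
  intro k
  induction k with
  | zero =>
    intro x y hcard _
    have : ∀ i : Fin n, y i = x i := by
      intro i
      by_contra h
      have : i ∈ Finset.univ.filter fun i => y i ≠ x i := by
        simp [h]
      have := Finset.card_pos.mpr ⟨i, this⟩
      omega
    have : y = x := funext this
    rw [this]
  | succ k ih =>
    intro x y hcard hagree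
    by_cases hyx : y = x
    · rw [hyx]
    · have : ∃ j, y j ≠ x j := by
        by_contra h
        push_neg at h
        exact hyx (funext h)
      obtain ⟨j, hj⟩ := this
      have hjS : j ∉ S f x := fun h => hj (hagree j h)
      have hfx' : f (flipOn x {j}) = f x := by
        rw [mem_S, not_not] at hjS; exact hjS
      set x' := flipOn x {j} with hx'
      have hSx' : S f x' = S f x := S_flip_eq hbs x j hfx'
      have hagree' : ∀ i ∈ S f x', y i = x' i := by
        intro i hi
        rw [hSx'] at hi
        have hij : i ≠ j := fun h => hjS (h ▸ hi)
        rw [hx', flipOn_single_ne _ hij]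
        exact hagree i hi
      have hyj : y j = x' j := by
        rw [hx', flipOn_single_self]
        cases hxj : x j <;> cases hyj : y j <;> simp_all
      have hsub : (Finset.univ.filter fun i => y i ≠ x' i) ⊆
          (Finset.univ.filter fun i => y i ≠ x i).erase j := by
        intro i hi
        rw [Finset.mem_filter] at hi
        have hij : i ≠ j := by
          intro h; subst h; exact hi.2 hyj
        rw [Finset.mem_erase]
        refine ⟨hij, ?_⟩
        rw [Finset.mem_filter]
        refine ⟨Finset.mem_univ i, ?_⟩
        rw [hx', flipOn_single_ne _ hij] at hi
        exact hi.2
      have hjmem : j ∈ (Finset.univ.filter fun i => y i ≠ x i) := by simp [hj]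
      have hcard' : (Finset.univ.filter fun i => y i ≠ x' i).card ≤ k := by
        have h1 := Finset.card_le_card hsub
        have h2 := Finset.card_erase_of_mem hjmem
        have h3 := Finset.card_pos.mpr ⟨j, hjmem⟩
        omega
      exact Relation.ReflTransGen.head ⟨hfx', j, rfl⟩ (ih x' y hcard' hagree')

end ComponentAux

/-- if `f` depends on every bit and `b(f,π_p) = s(f,π_p)` for some
`p ∈ (0,1)`, then for every `x`, the connected component of `x` within the level set
`{y : f y = f x}` of the hypercube graph equals the subcube
`{y : y_i = x_i for all pivotal i}`. -/
theorem component_eq_subcube (n : ℕ) (f : (Fin n → Bool) → Bool) (p : ℝ)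
    (hp0 : 0 < p) (hp1 : p < 1)
    (hdep : ∀ i : Fin n, ∃ x, f (flipOn x {i}) ≠ f x)
    (heq : distBS f p = distSens f p) :
    ∀ x : Fin n → Bool,
      {y | Relation.ReflTransGen
          (fun a b => f b = f a ∧ ∃ i : Fin n, b = flipOn a {i}) x y}
        = {y | ∀ i : Fin n, f (flipOn x {i}) ≠ f x → y i = x i} := by
  intro x
  have hbs : ∀ z, bsAt f z = sensAt f z :=
    fun z => ComponentAux.pointwise_eq hp0 hp1 heq z
  ext y
  simp only [Set.mem_setOf_eq]
  constructor
  · intro h i hi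
    exact (ComponentAux.reach_invariant hbs x y h).2 i (ComponentAux.mem_S.mpr hi)
  · intro h
    exact ComponentAux.reach_of_agree hbs
      (Finset.univ.filter fun i => y i ≠ x i).card x y le_rfl
      (fun i hi => h i (ComponentAux.mem_S.mp hi))
end
end

section
/- A random set I ⊆ [n] defined on a probability space carrying i.i.d. Bernoulli(p) bits x is local if and only if there exists a filtration (F_J)_{J⊆[n]} indexed by subsets of [n] (monotone under inclusion) such that I is a stopping set with respect to the filtration and x is an independent field with respect to it. -/
open MeasureTheory ProbabilityTheory
open scoped ENNReal

open MeasurableSpace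
set_option linter.unusedSectionVars false

namespace LocStop

variable {n : ℕ} {Ω : Type*} [MeasurableSpace Ω]

/-- cylinder event -/
def cyl (x : Fin n → Ω → Bool) (T : Finset (Fin n)) (f : Fin n → Bool) : Set Ω :=
  {ω | ∀ i ∈ T, x i ω = f i}

lemma measurableSet_cyl {x : Fin n → Ω → Bool} (hx : ∀ i, Measurable (x i))
    (T : Finset (Fin n)) (f : Fin n → Bool) : MeasurableSet (cyl x T f) := by
  have : cyl x T f = ⋂ i ∈ T, x i ⁻¹' {f i} := by ext ω; simp [cyl]
  rw [this]
  exact Set.Finite.measurableSet_biInter (T.finite_toSet) fun i _ =>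
    (hx i) (measurableSet_singleton _)

lemma cyl_union (x : Fin n → Ω → Bool) (T₁ T₂ : Finset (Fin n)) (f : Fin n → Bool) :
    cyl x (T₁ ∪ T₂) f = cyl x T₁ f ∩ cyl x T₂ f := by
  ext ω
  simp only [cyl, Set.mem_setOf_eq, Set.mem_inter_iff, Finset.mem_union]
  constructor
  · intro h; exact ⟨fun i hi => h i (Or.inl hi), fun i hi => h i (Or.inr hi)⟩
  · rintro ⟨h1, h2⟩ i (hi | hi); exacts [h1 i hi, h2 i hi]

/-- combining two cylinders with consistent assignments -/
lemma cyl_inter_cyl (x : Fin n → Ω → Bool) {T₁ T₂ : Finset (Fin n)} {f g : Fin n → Bool}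
    (hcons : ∀ i ∈ T₁ ∩ T₂, f i = g i) :
    cyl x T₁ f ∩ cyl x T₂ g = cyl x (T₁ ∪ T₂) (fun i => if i ∈ T₁ then f i else g i) := by
  ext ω
  simp only [cyl, Set.mem_inter_iff, Set.mem_setOf_eq, Finset.mem_union]
  constructor
  · rintro ⟨h1, h2⟩ i hi
    by_cases hiT : i ∈ T₁
    · simp only [hiT, if_true]; exact h1 i hiT
    · simp only [hiT, if_false]
      rcases hi with hi | hi
      · exact absurd hi hiT
      · exact h2 i hi
  · intro h
    constructor
    · intro i hi
      have := h i (Or.inl hi); simpa [hi] using this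
    · intro i hi
      have := h i (Or.inr hi)
      by_cases hiT : i ∈ T₁
      · rw [this]; simp [hiT, hcons i (Finset.mem_inter.2 ⟨hiT, hi⟩)]
      · simpa [hiT] using this

/-- the set of cylinders over subsets of K -/
def cylSets (x : Fin n → Ω → Bool) (K : Finset (Fin n)) : Set (Set Ω) :=
  {s | ∃ T ⊆ K, ∃ f, s = cyl x T f}

lemma isPiSystem_cylSets (x : Fin n → Ω → Bool) (K : Finset (Fin n)) :
    IsPiSystem (cylSets x K) := by
  rintro s ⟨T₁, hT₁, f, rfl⟩ t ⟨T₂, hT₂, g, rfl⟩ hne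
  have hcons : ∀ i ∈ T₁ ∩ T₂, f i = g i := by
    obtain ⟨ω, h1, h2⟩ := hne
    intro i hi
    rw [← h1 i (Finset.mem_inter.1 hi).1, h2 i (Finset.mem_inter.1 hi).2]
  rw [cyl_inter_cyl x hcons]
  exact ⟨T₁ ∪ T₂, Finset.union_subset hT₁ hT₂, _, rfl⟩

/-- cylinders over T ⊆ K are measurable w.r.t. the σ-algebra generated by bit events on K -/
lemma cyl_measurable_gen {x : Fin n → Ω → Bool} {T K : Finset (Fin n)} (hTK : T ⊆ K)
    (f : Fin n → Bool) :
    MeasurableSet[generateFrom (⋃ i ∈ K, {{ω | x i ω = true}})] (cyl x T f) := by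
  have : cyl x T f = ⋂ i ∈ T, {ω | x i ω = f i} := by ext ω; simp [cyl]
  rw [this]
  refine Set.Finite.measurableSet_biInter T.finite_toSet fun i hi => ?_
  have hmem : {ω | x i ω = true} ∈ ⋃ j ∈ K, {{ω | x j ω = true}} := by
    simp only [Set.mem_iUnion]
    exact ⟨i, hTK hi, rfl⟩
  cases hf : f i with
  | true => exact measurableSet_generateFrom hmem
  | false =>
    have : {ω | x i ω = false} = {ω | x i ω = true}ᶜ := by ext ω; simp
    rw [this]
    exact (measurableSet_generateFrom hmem).compl

lemma gen_cylSets_eq (x : Fin n → Ω → Bool) (K : Finset (Fin n)) :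
    generateFrom (cylSets x K) = generateFrom (⋃ i ∈ K, {{ω | x i ω = true}}) := by
  apply le_antisymm
  · refine generateFrom_le ?_
    rintro s ⟨T, hT, f, rfl⟩
    exact cyl_measurable_gen hT f
  · refine generateFrom_le ?_
    intro s hs
    simp only [Set.mem_iUnion] at hs
    obtain ⟨i, hi, rfl⟩ := hs
    refine measurableSet_generateFrom ⟨{i}, by simpa using hi, fun _ => true, ?_⟩
    ext ω; simp [cyl]

variable (μ : Measure Ω) [IsProbabilityMeasure μ] {p : ℝ≥0∞}

lemma measure_cyl_compl (hp : p ≤ 1) {x : Fin n → Ω → Bool} (hx : ∀ i, Measurable (x i))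
    (hiid : ∀ y : Fin n → Bool,
      μ {ω | ∀ i, x i ω = y i} = ∏ i, (if y i then p else 1 - p))
    (S : Finset (Fin n)) :
    ∀ f : Fin n → Bool, μ (cyl x Sᶜ f) = ∏ i ∈ Sᶜ, (if f i then p else 1 - p) := by
  induction S using Finset.induction with
  | empty =>
    intro f
    have : cyl x (∅ : Finset (Fin n))ᶜ f = {ω | ∀ i, x i ω = f i} := by
      ext ω; simp [cyl]
    rw [this, hiid f]
    simp [Finset.compl_empty]
  | @insert j S hj ih =>
    intro f
    have hjc : j ∈ Sᶜ := by simp [hj]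
    have hsplit : Sᶜ = insert j ((insert j S)ᶜ) := by
      rw [Finset.compl_insert, Finset.insert_erase hjc]
    have hkey : cyl x (insert j S)ᶜ f =
        cyl x Sᶜ (Function.update f j true) ∪ cyl x Sᶜ (Function.update f j false) := by
      ext ω
      simp only [cyl, Set.mem_setOf_eq, Set.mem_union]
      constructor
      · intro h
        cases hb : x j ω with
        | true =>
          left; intro i hi
          rcases eq_or_ne i j with rfl | hij
          · simp [hb]
          · rw [Function.update_of_ne hij]
            exact h i (by rw [hsplit] at hi; rcases Finset.mem_insert.1 hi with h' | h'
                          · exact absurd h' hij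
                          · exact h')
        | false =>
          right; intro i hi
          rcases eq_or_ne i j with rfl | hij
          · simp [hb]
          · rw [Function.update_of_ne hij]
            exact h i (by rw [hsplit] at hi; rcases Finset.mem_insert.1 hi with h' | h'
                          · exact absurd h' hij
                          · exact h')
      · rintro (h | h) <;>
        · intro i hi
          have hij : i ≠ j := by
            rintro rfl
            simp [Finset.compl_insert] at hi
          have hi' : i ∈ Sᶜ := by rw [hsplit]; exact Finset.mem_insert_of_mem hi
          have := h i hi'
          rwa [Function.update_of_ne hij] at this
    have hdisj : Disjoint (cyl x Sᶜ (Function.update f j true))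
        (cyl x Sᶜ (Function.update f j false)) := by
      rw [Set.disjoint_left]
      intro ω h1 h2
      have e1 := h1 j hjc
      have e2 := h2 j hjc
      simp [Function.update_self] at e1 e2
      rw [e1] at e2; exact Bool.true_eq_false.mp e2
    have hprod : ∀ b : Bool, (∏ i ∈ Sᶜ, (if Function.update f j b i then p else 1 - p))
        = (if b then p else 1 - p) * ∏ i ∈ (insert j S)ᶜ, (if f i then p else 1 - p) := by
      intro b
      rw [hsplit, Finset.prod_insert (by simp [Finset.compl_insert])]
      congr 1
      · simp [Function.update_self]
      · apply Finset.prod_congr rfl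
        intro i hi
        have hij : i ≠ j := by
          rintro rfl; simp [Finset.compl_insert] at hi
        rw [Function.update_of_ne hij]
    rw [hkey, measure_union hdisj (measurableSet_cyl hx _ _), ih, ih, hprod, hprod]
    rw [← add_mul]
    have : (if true then p else 1 - p) + (if false then p else 1 - p) = 1 := by
      simp [hp, add_comm, tsub_add_cancel_of_le hp]
    rw [this, one_mul]

lemma measure_cyl (hp : p ≤ 1) {x : Fin n → Ω → Bool} (hx : ∀ i, Measurable (x i))
    (hiid : ∀ y : Fin n → Bool,
      μ {ω | ∀ i, x i ω = y i} = ∏ i, (if y i then p else 1 - p))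
    (T : Finset (Fin n)) (f : Fin n → Bool) :
    μ (cyl x T f) = ∏ i ∈ T, (if f i then p else 1 - p) := by
  have := measure_cyl_compl μ hp hx hiid Tᶜ f
  rwa [compl_compl] at this

/-- product formula for cylinders with disjoint supports -/
lemma measure_cyl_inter (hp : p ≤ 1) {x : Fin n → Ω → Bool} (hx : ∀ i, Measurable (x i))
    (hiid : ∀ y : Fin n → Bool,
      μ {ω | ∀ i, x i ω = y i} = ∏ i, (if y i then p else 1 - p))
    {T₁ T₂ : Finset (Fin n)} (hdisj : Disjoint T₁ T₂) (f g : Fin n → Bool) :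
    μ (cyl x T₁ f ∩ cyl x T₂ g) = μ (cyl x T₁ f) * μ (cyl x T₂ g) := by
  have hcons : ∀ i ∈ T₁ ∩ T₂, f i = g i := by
    intro i hi
    exact absurd hi (by simp [Finset.disjoint_iff_inter_eq_empty.1 hdisj])
  rw [cyl_inter_cyl x hcons, measure_cyl μ hp hx hiid, measure_cyl μ hp hx hiid,
    measure_cyl μ hp hx hiid, Finset.prod_union hdisj]
  congr 1
  · exact Finset.prod_congr rfl fun i hi => by simp [hi]
  · refine Finset.prod_congr rfl fun i hi => ?_
    have : i ∉ T₁ := fun h => Finset.disjoint_left.1 hdisj h hi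
    simp [this]

end LocStop

open LocStop


/-- a random set `I ⊆ [n]`, on a probability space carrying i.i.d.
Bernoulli(p) bits `x`, is local if and only if there exists a filtration `(F_J)_{J ⊆ [n]}`
(indexed by subsets, monotone under inclusion) such that `I` is a stopping set for the
filtration and `x` is an independent field for it. -/
theorem local_iff_stopping_set {n : ℕ} {Ω : Type*} [MeasurableSpace Ω]
    (μ : Measure Ω) [IsProbabilityMeasure μ] (p : ℝ≥0∞) (hp : p ≤ 1)
    (x : Fin n → Ω → Bool) (hx : ∀ i, Measurable (x i))
    (hiid : ∀ y : Fin n → Bool,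
      μ {ω | ∀ i, x i ω = y i} = ∏ i, (if y i then p else 1 - p))
    (I : Ω → Finset (Fin n)) (hI : ∀ J, MeasurableSet {ω | I ω = J}) :
    (∀ J : Finset (Fin n),
      Indep
        (MeasurableSpace.generateFrom
          (insert {ω | I ω = J} (⋃ i ∈ J, {{ω | x i ω = true}})))
        (MeasurableSpace.generateFrom (⋃ i ∈ Jᶜ, {{ω | x i ω = true}})) μ)
    ↔
    (∃ F : Finset (Fin n) → MeasurableSpace Ω,
      (∀ J₁ J₂ : Finset (Fin n), J₁ ⊆ J₂ → F J₁ ≤ F J₂) ∧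
      (∀ J, F J ≤ ‹MeasurableSpace Ω›) ∧
      (∀ J, MeasurableSet[F J] {ω | I ω = J}) ∧
      (∀ J : Finset (Fin n),
        MeasurableSpace.generateFrom (⋃ i ∈ J, {{ω | x i ω = true}}) ≤ F J) ∧
      (∀ J : Finset (Fin n),
        Indep (MeasurableSpace.generateFrom (⋃ i ∈ Jᶜ, {{ω | x i ω = true}}))
          (F J) μ)) := by
  classical
  constructor
  · intro hloc
    -- the π-system generating F J
    set Q : Finset (Fin n) → Set (Set Ω) := fun J =>
      {s | ∃ T ⊆ J, ∃ f : Fin n → Bool,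
        s = cyl x T f ∨ ∃ J' ⊆ J, s = {ω | I ω = J'} ∩ cyl x T f} with hQdef
    refine ⟨fun J => generateFrom (Q J), ?_, ?_, ?_, ?_, ?_⟩
    · -- monotone
      intro J₁ J₂ hsub
      refine generateFrom_mono ?_
      rintro s ⟨T, hT, f, hs⟩
      refine ⟨T, hT.trans hsub, f, ?_⟩
      rcases hs with rfl | ⟨J', hJ', rfl⟩
      · exact Or.inl rfl
      · exact Or.inr ⟨J', hJ'.trans hsub, rfl⟩
    · -- ≤ ambient
      intro J
      refine generateFrom_le ?_
      rintro s ⟨T, hT, f, hs⟩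
      rcases hs with rfl | ⟨J', hJ', rfl⟩
      · exact measurableSet_cyl hx T f
      · exact (hI J').inter (measurableSet_cyl hx T f)
    · -- stopping set
      intro J
      refine measurableSet_generateFrom ⟨∅, Finset.empty_subset _, fun _ => true,
        Or.inr ⟨J, subset_rfl, ?_⟩⟩
      ext ω; simp [cyl]
    · -- contains σ(x_J)
      intro J
      refine generateFrom_le ?_
      intro s hs
      simp only [Set.mem_iUnion] at hs
      obtain ⟨i, hi, rfl⟩ := hs
      refine measurableSet_generateFrom ⟨{i}, by simpa using hi, fun _ => true, Or.inl ?_⟩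
      ext ω; simp [cyl]
    · -- the independence
      intro J
      have hpiQ : IsPiSystem (Q J) := by
        rintro s ⟨T₁, hT₁, f, hs⟩ t ⟨T₂, hT₂, g, ht⟩ hne
        rcases hs with rfl | ⟨J₁, hJ₁, rfl⟩ <;> rcases ht with rfl | ⟨J₂, hJ₂, rfl⟩
        · obtain ⟨ω, h1, h2⟩ := hne
          have hcons : ∀ i ∈ T₁ ∩ T₂, f i = g i := fun i hi => by
            rw [← h1 i (Finset.mem_inter.1 hi).1, h2 i (Finset.mem_inter.1 hi).2]
          rw [cyl_inter_cyl x hcons]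
          exact ⟨T₁ ∪ T₂, Finset.union_subset hT₁ hT₂, _, Or.inl rfl⟩
        · obtain ⟨ω, h1, hI2, h2⟩ := hne
          have hcons : ∀ i ∈ T₁ ∩ T₂, f i = g i := fun i hi => by
            rw [← h1 i (Finset.mem_inter.1 hi).1, h2 i (Finset.mem_inter.1 hi).2]
          rw [Set.inter_left_comm, cyl_inter_cyl x hcons]
          exact ⟨T₁ ∪ T₂, Finset.union_subset hT₁ hT₂, _, Or.inr ⟨J₂, hJ₂, rfl⟩⟩
        · obtain ⟨ω, ⟨hI1, h1⟩, h2⟩ := hne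
          have hcons : ∀ i ∈ T₁ ∩ T₂, f i = g i := fun i hi => by
            rw [← h1 i (Finset.mem_inter.1 hi).1, h2 i (Finset.mem_inter.1 hi).2]
          rw [Set.inter_assoc, cyl_inter_cyl x hcons]
          exact ⟨T₁ ∪ T₂, Finset.union_subset hT₁ hT₂, _, Or.inr ⟨J₁, hJ₁, rfl⟩⟩
        · obtain ⟨ω, ⟨hI1, h1⟩, hI2, h2⟩ := hne
          have hJeq : J₁ = J₂ := by rw [← hI1, hI2]
          subst hJeq
          have hcons : ∀ i ∈ T₁ ∩ T₂, f i = g i := fun i hi => by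
            rw [← h1 i (Finset.mem_inter.1 hi).1, h2 i (Finset.mem_inter.1 hi).2]
          have hset : ({ω | I ω = J₁} ∩ cyl x T₁ f) ∩ ({ω | I ω = J₁} ∩ cyl x T₂ g)
              = {ω | I ω = J₁} ∩ (cyl x T₁ f ∩ cyl x T₂ g) := by
            ext ω'; simp only [Set.mem_inter_iff, Set.mem_setOf_eq]; tauto
          rw [hset, cyl_inter_cyl x hcons]
          exact ⟨T₁ ∪ T₂, Finset.union_subset hT₁ hT₂, _, Or.inr ⟨J₁, hJ₁, rfl⟩⟩
      have hindep : IndepSets (cylSets x Jᶜ) (Q J) μ := by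
        rw [IndepSets_iff]
        rintro A B ⟨T', hT', g, rfl⟩ ⟨T, hT, f, hB⟩
        rcases hB with rfl | ⟨J', hJ', rfl⟩
        · -- two plain cylinders
          have hdisj : Disjoint T' T := Finset.disjoint_left.2 fun i hi hiT =>
            Finset.mem_compl.1 (hT' hi) (hT hiT)
          exact measure_cyl_inter μ hp hx hiid hdisj g f
        · -- tagged cylinder
          set T₁ : Finset (Fin n) := T ∩ J' with hT₁def
          set T₂ : Finset (Fin n) := T \ J' with hT₂def
          have hTsplit : T₁ ∪ T₂ = T := by
            ext i
            simp only [hT₁def, hT₂def, Finset.mem_union, Finset.mem_inter, Finset.mem_sdiff]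
            tauto
          have hcylsplit : cyl x T f = cyl x T₁ f ∩ cyl x T₂ f := by
            rw [← cyl_union, hTsplit]
          have hind := (Indep_iff _ _ μ).mp (hloc J')
          have hA' : MeasurableSet[MeasurableSpace.generateFrom
              (insert {ω | I ω = J'} (⋃ i ∈ J', {{ω | x i ω = true}}))]
              ({ω | I ω = J'} ∩ cyl x T₁ f) :=
            (measurableSet_generateFrom (Set.mem_insert _ _)).inter
              ((generateFrom_mono (Set.subset_insert _ _)) _
                (cyl_measurable_gen Finset.inter_subset_right f))
          have hT₂sub : T₂ ⊆ J'ᶜ := fun i hi =>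
            Finset.mem_compl.2 (Finset.mem_sdiff.1 hi).2
          have hT'sub : T' ⊆ J'ᶜ := hT'.trans (Finset.compl_subset_compl.2 hJ')
          have hm2 : MeasurableSet[MeasurableSpace.generateFrom
              (⋃ i ∈ J'ᶜ, {{ω | x i ω = true}})] (cyl x T₂ f) := cyl_measurable_gen hT₂sub f
          have hm3 : MeasurableSet[MeasurableSpace.generateFrom
              (⋃ i ∈ J'ᶜ, {{ω | x i ω = true}})] (cyl x T' g) := cyl_measurable_gen hT'sub g
          have hdisj₂ : Disjoint T₂ T' := Finset.disjoint_left.2 fun i hi hiT' =>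
            Finset.mem_compl.1 (hT' hiT') (hT (Finset.mem_sdiff.1 hi).1)
          have eq1 := hind _ _ hA' (hm2.inter hm3)
          have eq2 := measure_cyl_inter μ hp hx hiid hdisj₂ f g
          have eq3 := hind _ _ hA' hm2
          have hset : cyl x T' g ∩ ({ω | I ω = J'} ∩ cyl x T f)
              = ({ω | I ω = J'} ∩ cyl x T₁ f) ∩ (cyl x T₂ f ∩ cyl x T' g) := by
            rw [hcylsplit]
            ext ω'; simp only [Set.mem_inter_iff, Set.mem_setOf_eq]; tauto
          have hset2 : {ω | I ω = J'} ∩ cyl x T f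
              = ({ω | I ω = J'} ∩ cyl x T₁ f) ∩ cyl x T₂ f := by
            rw [hcylsplit, Set.inter_assoc]
          rw [hset, eq1, eq2, hset2, eq3]
          ring
      have hbig : Indep (MeasurableSpace.generateFrom (cylSets x Jᶜ))
          (MeasurableSpace.generateFrom (Q J)) μ := by
        refine IndepSets.indep' ?_ ?_ (isPiSystem_cylSets x Jᶜ) hpiQ hindep
        · rintro s ⟨T, hT, f, rfl⟩
          exact measurableSet_cyl hx T f
        · rintro s ⟨T, hT, f, hs⟩
          rcases hs with rfl | ⟨J', hJ', rfl⟩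
          · exact measurableSet_cyl hx T f
          · exact (hI J').inter (measurableSet_cyl hx T f)
      exact indep_of_indep_of_le_left hbig (le_of_eq (gen_cylSets_eq x Jᶜ).symm)
  · -- reverse direction
    rintro ⟨F, hmono, hleF, hstop, hXle, hindF⟩ J
    have h1 : MeasurableSpace.generateFrom
        (insert {ω | I ω = J} (⋃ i ∈ J, {{ω | x i ω = true}})) ≤ F J := by
      refine generateFrom_le ?_
      rintro s (rfl | hs)
      · exact hstop J
      · exact (hXle J) _ (measurableSet_generateFrom hs)
    exact (indep_of_indep_of_le_right (hindF J) h1).symm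
end
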